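/- arXiv:1102.1258 — 2 statements merged into one kernel-verified Lean document; each statement's English description precedes it below -/
import Mathlib

section
/- Let n be a positive integer, k > 0, β ∈ ℝ and A ∈ ℝ with A ≠ 0. If the function u(x) = A·sin(nπx) is a stationary beam solution with parameters β, k, then necessarily β < −μ_n(k) and A² = −2(β + μ_n(k))/(n²π²). -/
open Real

/-- `μ_n(k) = k/(n²π²) + n²π²`. -/
noncomputable def mu (n : ℕ) (k : ℝ) : ℝ := k / ((n : ℝ)^2 * π^2) + (n : ℝ)^2 * π^2

/-- A stationary beam solution with parameters `β ∈ ℝ`, `k > 0`: a four-times continuously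
differentiable function satisfying the beam equation on `[0,1]`
together with the hinged boundary conditions `u(0) = u(1) = u''(0) = u''(1) = 0`. -/
def IsStationarySolution (β k : ℝ) (u : ℝ → ℝ) : Prop :=
  ContDiff ℝ 4 u ∧
  (∀ x ∈ Set.Icc (0 : ℝ) 1,
    iteratedDeriv 4 u x
      - (β + ∫ y in (0 : ℝ)..1, (deriv u y)^2) * iteratedDeriv 2 u x + k * u x = 0) ∧
  u 0 = 0 ∧ u 1 = 0 ∧ iteratedDeriv 2 u 0 = 0 ∧ iteratedDeriv 2 u 1 = 0

/-! For `u = A sin(cx)` with `c = nπ` we have `u'' = -c²u`, `u'''' = c⁴u` and `∫₀¹ u'² = A²c²/2`,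
so the beam equation collapses to `u(x)·(c⁴ + (β + A²c²/2)c² + k) = 0`. Evaluating it at the crest
`x = 1/(2n)`, where `u = A ≠ 0`, gives `β + μ_n(k) = -A²c²/2`, which is negative. -/

lemma iteratedDeriv_even_const_mul_sin_mul (A c x : ℝ) (m : ℕ) :
    iteratedDeriv (2 * m) (fun x => A * sin (c * x)) x = (-c ^ 2) ^ m * (A * sin (c * x)) := by
  rw [iteratedDeriv_const_mul_field, iteratedDeriv_comp_const_mul contDiff_sin,
    iteratedDeriv_even_sin]
  simp only [Pi.mul_apply, Pi.pow_apply, Pi.neg_apply, Pi.one_apply]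
  rw [neg_pow, pow_mul]
  ring

lemma deriv_const_mul_sin_mul (A c x : ℝ) :
    deriv (fun x => A * sin (c * x)) x = A * c * cos (c * x) := by
  rw [((hasDerivAt_const_mul (x := x) c).sin.const_mul A).deriv]
  ring

lemma integral_cos_nat_mul_pi_sq {n : ℕ} (hn : n ≠ 0) :
    ∫ y in (0 : ℝ)..1, cos (n * π * y) ^ 2 = 1 / 2 := by
  have hnπ : (n : ℝ) * π ≠ 0 := by positivity
  rw [intervalIntegral.integral_comp_mul_left (fun x => cos x ^ 2) hnπ, integral_cos_sq]
  simp only [mul_one, mul_zero, sin_nat_mul_pi, sin_zero, sub_self, zero_add, sub_zero, smul_eq_mul]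
  field_simp

theorem IsStationarySolution.sin_mode_add_mu_eq {n : ℕ} (hn : n ≠ 0) {k β A : ℝ} (hA : A ≠ 0)
    (h : IsStationarySolution β k (fun x => A * sin (n * π * x))) :
    β + mu n k = -(A ^ 2 * ((n : ℝ) ^ 2 * π ^ 2)) / 2 := by
  set c : ℝ := n * π with hc
  have hn_one : (1 : ℝ) ≤ n := by exact_mod_cast Nat.one_le_iff_ne_zero.2 hn
  have henergy : ∫ y in (0 : ℝ)..1, deriv (fun x => A * sin (c * x)) y ^ 2 = A ^ 2 * c ^ 2 / 2 := by
    simp_rw [deriv_const_mul_sin_mul, mul_pow]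
    rw [intervalIntegral.integral_const_mul, integral_cos_nat_mul_pi_sq hn]
    ring
  set x₀ : ℝ := 1 / (2 * n) with hx₀_def
  have hx₀ : x₀ ∈ Set.Icc (0 : ℝ) 1 :=
    ⟨by positivity, (div_le_one (by positivity)).2 (by linarith)⟩
  have hcrest : sin (c * x₀) = 1 := by
    rw [show c * x₀ = π / 2 by rw [hc, hx₀_def]; field_simp, sin_pi_div_two]
  have h₂ : iteratedDeriv 2 (fun x => A * sin (c * x)) x₀ = -c ^ 2 * A :=
    (iteratedDeriv_even_const_mul_sin_mul A c x₀ 1).trans (by rw [hcrest]; ring)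
  have h₄ : iteratedDeriv 4 (fun x => A * sin (c * x)) x₀ = c ^ 4 * A :=
    (iteratedDeriv_even_const_mul_sin_mul A c x₀ 2).trans (by rw [hcrest]; ring)
  have hbeam := h.2.1 x₀ hx₀
  simp only [h₂, h₄, henergy, hcrest, mul_one] at hbeam
  have hmu : mu n k = k / c ^ 2 + c ^ 2 := by rw [mu, hc]; ring
  have hfactor : A * c ^ 2 * (β + mu n k + A ^ 2 * c ^ 2 / 2) = 0 := by
    have hk : c ^ 2 * (k / c ^ 2) = k := mul_div_cancel₀ k (by positivity)
    rw [hmu]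
    linear_combination hbeam + A * hk
  have hdisp := (mul_eq_zero.1 hfactor).resolve_left (by positivity)
  rw [hc] at hdisp
  linear_combination hdisp

theorem amplitude_of_buckled_solution_general (n : ℕ) (hn : 1 ≤ n) (k β A : ℝ)
    (hA : A ≠ 0)
    (h : IsStationarySolution β k (fun x => A * Real.sin ((n : ℝ) * π * x))) :
    β < -mu n k ∧ A^2 = -2 * (β + mu n k) / ((n : ℝ)^2 * π^2) := by
  have hrel := h.sin_mode_add_mu_eq (Nat.one_le_iff_ne_zero.1 hn) hA
  have hn_pos : (0 : ℝ) < n := by exact_mod_cast hn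
  have hscale : 0 < A ^ 2 * ((n : ℝ) ^ 2 * π ^ 2) := by positivity
  refine ⟨by linarith, ?_⟩
  rw [hrel]
  field_simp

/-- If `u(x) = A·sin(nπx)` with `A ≠ 0` is a stationary beam solution with parameters `β`, `k`,
then `β < −μ_n(k)` and `A² = −2(β + μ_n(k))/(n²π²)`. -/
theorem amplitude_of_buckled_solution (n : ℕ) (hn : 1 ≤ n) (k β A : ℝ) (hk : 0 < k)
    (hA : A ≠ 0)
    (h : IsStationarySolution β k (fun x => A * Real.sin ((n : ℝ) * π * x))) :
    β < -mu n k ∧ A^2 = -2 * (β + mu n k) / ((n : ℝ)^2 * π^2) :=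
  amplitude_of_buckled_solution_general n hn k β A hA h
end

section
/- Let k > 0 and β ≥ −β_c(k). Then the only stationary beam solution with parameters β, k is the identically zero function (the straight equilibrium position). -/
open Real

/-- The critical buckling load `β_c(k) = min_{n ≥ 1} μ_n(k)`. -/
noncomputable def betaC (k : ℝ) : ℝ := sInf {x : ℝ | ∃ n : ℕ, 1 ≤ n ∧ x = mu n k}

/-! Integrating the beam equation against `sin (nπx)` and integrating by parts (the hinged
boundary conditions kill all boundary terms) gives `((nπ)⁴ + (β + a)(nπ)² + k) cₙ = 0` for the sine
coefficients `cₙ` of `u`, where `a = ∫₀¹ u'²`. The factor is `(nπ)² (μₙ(k) + β + a) ≥ (nπ)² a`.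
So either `a = 0`, whence `u' = 0` and `u = 0`, or every `cₙ` vanishes and `u = 0` because the sine
system is complete on `[0,1]`: the odd `2`-periodic extension of `u` is continuous and all its
Fourier coefficients vanish. -/

open MeasureTheory Set intervalIntegral

section

variable {𝕜 F : Type*} [NontriviallyNormedField 𝕜] [NormedAddCommGroup F] [NormedSpace 𝕜 F]
  {f : 𝕜 → F}

theorem iteratedDeriv_iteratedDeriv (m n : ℕ) :
    iteratedDeriv m (iteratedDeriv n f) = iteratedDeriv (m + n) f := by
  simp only [iteratedDeriv_eq_iterate, Function.iterate_add_apply]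

theorem ContDiff.iteratedDeriv_right {m n : WithTop ℕ∞} {i : ℕ}
    (hf : ContDiff 𝕜 n f) (hmn : m + i ≤ n) : ContDiff 𝕜 m (iteratedDeriv i f) := by
  rw [iteratedDeriv_eq_equiv_comp]
  exact (ContinuousMultilinearMap.piFieldEquiv 𝕜 (Fin i) F).symm.contDiff.comp
    (hf.iteratedFDeriv_right hmn)

end

theorem eqOn_zero_of_integral_deriv_sq_eq_zero {u : ℝ → ℝ} (hu : ContDiff ℝ 1 u) (h0 : u 0 = 0)
    (h : ∫ y in (0 : ℝ)..1, deriv u y ^ 2 = 0) : EqOn u 0 (Icc 0 1) := by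
  have hcont : Continuous (deriv u) := hu.continuous_deriv le_rfl
  have hderiv : EqOn (deriv u) 0 (Icc 0 1) := by
    intro c hc
    by_contra hne
    exact (integral_pos zero_lt_one (hcont.pow 2).continuousOn (fun x _ => sq_nonneg _)
      ⟨c, hc, sq_pos_of_ne_zero hne⟩).ne' h
  intro x hx
  have hsub : uIcc 0 x ⊆ Icc 0 1 := uIcc_subset_Icc (left_mem_Icc.2 zero_le_one) hx
  have hftc := integral_deriv_eq_sub (fun y _ => hu.differentiable one_ne_zero y)
    (hcont.intervalIntegrable 0 x)
  rw [integral_congr fun y hy => hderiv (hsub hy), h0] at hftc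
  simpa using hftc.symm

theorem integral_iteratedDeriv_two_mul_sin {f : ℝ → ℝ} (hf : ContDiff ℝ 2 f) (h0 : f 0 = 0)
    (h1 : f 1 = 0) {ω : ℝ} (hω : sin ω = 0) :
    ∫ x in (0 : ℝ)..1, iteratedDeriv 2 f x * sin (ω * x)
      = -ω ^ 2 * ∫ x in (0 : ℝ)..1, f x * sin (ω * x) := by
  have hf' : ContDiff ℝ 1 (deriv f) := by
    simpa [iteratedDeriv_one] using hf.iteratedDeriv_right (m := 1) (i := 1) le_rfl
  have hF : ∀ x, HasDerivAt (fun x => deriv f x * sin (ω * x) - ω * f x * cos (ω * x))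
      (iteratedDeriv 2 f x * sin (ω * x) + ω ^ 2 * (f x * sin (ω * x))) x := by
    intro x
    have h1 := (hf'.differentiable one_ne_zero x).hasDerivAt
    have h2 := (hf.differentiable (by norm_num) x).hasDerivAt
    have hs := ((hasDerivAt_id x).const_mul ω).sin
    have hc := ((hasDerivAt_id x).const_mul ω).cos
    refine ((h1.mul hs).sub ((h2.const_mul ω).mul hc)).congr_deriv ?_
    simp only [iteratedDeriv_succ, iteratedDeriv_zero, id]
    ring
  have hcont : Continuous fun x => iteratedDeriv 2 f x * sin (ω * x) :=
    (hf.continuous_iteratedDeriv 2 le_rfl).mul (by fun_prop)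
  have hcont' : Continuous fun x => f x * sin (ω * x) := hf.continuous.mul (by fun_prop)
  have := integral_eq_sub_of_hasDerivAt (fun x _ => hF x)
    ((hcont.add (hcont'.const_mul _)).intervalIntegrable 0 1)
  rw [integral_add (hcont.intervalIntegrable 0 1) ((hcont'.const_mul _).intervalIntegrable 0 1),
    intervalIntegral.integral_const_mul] at this
  simp only [h0, h1, hω, mul_zero, mul_one, sin_zero, zero_mul, sub_zero] at this
  linarith

theorem AddCircle.eq_zero_of_fourierCoeff_eq_zero {T : ℝ} [Fact (0 < T)] {f : C(AddCircle T, ℂ)}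
    (hf : ∀ n, fourierCoeff f n = 0) : f = 0 := by
  apply ContinuousMap.toLp_injective (p := 2) haarAddCircle (𝕜 := ℂ)
  rw [map_zero]
  apply fourierBasis.repr.injective
  ext n
  rw [fourierBasis_repr, fourierCoeff_toLp, hf n, map_zero]
  rfl

section

open Complex
open scoped Interval

instance Real.fact_zero_lt_two : Fact ((0 : ℝ) < 2) := ⟨two_pos⟩

/-- Through `AddCircle.liftIoc 2 (-1)` this becomes the odd `2`-periodic extension of `u` from
`[0,1]`; the branch `x ≤ 0` makes it agree with `u` on all of `Ioc 0 1`. -/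
noncomputable def oddExtension (u : ℝ → ℝ) (x : ℝ) : ℝ := if x ≤ 0 then -u (-x) else u x

theorem continuous_oddExtension {u : ℝ → ℝ} (hu : Continuous u) (h0 : u 0 = 0) :
    Continuous (oddExtension u) :=
  Continuous.if_le (hu.comp continuous_neg).neg hu continuous_id continuous_const
    fun x hx => by simp [hx, h0]

theorem Complex.exp_neg_mul_I_sub_exp_mul_I (z : ℂ) :
    exp (-z * I) - exp (z * I) = -2 * I * sin z := by
  linear_combination I * two_sin z + (exp (-z * I) - exp (z * I)) * I_sq

theorem fourierCoeff_liftIoc_oddExtension {u : ℝ → ℝ} (hu : Continuous u) (h0 : u 0 = 0)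
    (n : ℤ) :
    fourierCoeff (AddCircle.liftIoc 2 (-1) fun x => (oddExtension u x : ℂ)) n
      = -I * ∫ x in (0 : ℝ)..1, ((u x * Real.sin (n * π * x) : ℝ) : ℂ) := by
  set F : ℝ → ℂ := fun x => exp (-(n * π * x : ℝ) * I) * oddExtension u x
  have hF : Continuous F := by
    have := continuous_oddExtension hu h0
    fun_prop
  have hodd : ∀ x ∈ Ι (0 : ℝ) 1,
      F x + F (-x) = -2 * I * ((u x * Real.sin (n * π * x) : ℝ) : ℂ) := by
    intro x hx
    rw [uIoc_of_le zero_le_one] at hx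
    have hreflect : ((n * π * -x : ℝ) : ℂ) = -((n * π * x : ℝ) : ℂ) := by push_cast; ring
    simp only [F, oddExtension, if_neg (not_le.2 hx.1), if_pos (neg_nonpos.2 hx.1.le), neg_neg,
      hreflect, ofReal_mul _ (Real.sin _), ofReal_sin, ofReal_neg]
    linear_combination (u x : ℂ) * exp_neg_mul_I_sub_exp_mul_I ((n * π * x : ℝ) : ℂ)
  calc fourierCoeff (AddCircle.liftIoc 2 (-1) fun x => (oddExtension u x : ℂ)) n
      = (1 / 2 : ℝ) • ∫ x in (-1 : ℝ)..1, F x := by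
        rw [fourierCoeff_eq_intervalIntegral _ _ (-1), show (-1 : ℝ) + 2 = 1 by norm_num]
        congr 1
        refine integral_congr_ae (ae_of_all _ fun x hx => ?_)
        rw [uIoc_of_le (by norm_num)] at hx
        rw [AddCircle.liftIoc_coe_apply (by norm_num; exact hx), fourier_coe_apply, smul_eq_mul]
        congr 2
        push_cast
        ring
    _ = (1 / 2 : ℝ) • ∫ x in (0 : ℝ)..1, (F x + F (-x)) := by
        have hF' : Continuous fun x => F (-x) := hF.comp continuous_neg
        rw [← integral_add_adjacent_intervals (b := 0) (hF.intervalIntegrable _ _)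
          (hF.intervalIntegrable _ _), integral_add (hF.intervalIntegrable _ _)
          (hF'.intervalIntegrable _ _), intervalIntegral.integral_comp_neg, neg_zero, add_comm]
    _ = -I * ∫ x in (0 : ℝ)..1, ((u x * Real.sin (n * π * x) : ℝ) : ℂ) := by
        rw [integral_congr_ae (ae_of_all _ hodd), intervalIntegral.integral_const_mul]
        rw [Complex.real_smul]
        push_cast
        ring

noncomputable def sineCoeff (f : ℝ → ℝ) (n : ℕ) : ℝ :=
  ∫ x in (0 : ℝ)..1, f x * Real.sin (n * π * x)

theorem eqOn_zero_of_sineCoeff_eq_zero {u : ℝ → ℝ} (hu : Continuous u) (h0 : u 0 = 0)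
    (h1 : u 1 = 0) (h : ∀ n, sineCoeff u n = 0) : EqOn u 0 (Icc 0 1) := by
  have hint : ∀ n : ℤ, ∫ x in (0 : ℝ)..1, u x * Real.sin (n * π * x) = 0 := by
    intro n
    obtain ⟨m, rfl | rfl⟩ := Int.eq_nat_or_neg n
    · exact_mod_cast h m
    · simpa [sineCoeff, neg_mul, Real.sin_neg, intervalIntegral.integral_neg] using h m
  let G : C(AddCircle (2 : ℝ), ℂ) :=
    ⟨AddCircle.liftIoc 2 (-1) fun x => (oddExtension u x : ℂ),
      AddCircle.liftIoc_continuous (by norm_num [oddExtension, h1])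
        (Complex.continuous_ofReal.comp (continuous_oddExtension hu h0)).continuousOn⟩
  have hG : G = 0 := AddCircle.eq_zero_of_fourierCoeff_eq_zero fun n => by
    rw [ContinuousMap.coe_mk, fourierCoeff_liftIoc_oddExtension hu h0,
      intervalIntegral.integral_ofReal, hint n, ofReal_zero, mul_zero]
  intro x hx
  have hGx : G x = 0 := by rw [hG]; rfl
  have hx' : x ∈ Ioc (-1) (-1 + 2) := ⟨by linarith [hx.1], by linarith [hx.2]⟩
  rw [ContinuousMap.coe_mk, AddCircle.liftIoc_coe_apply hx'] at hGx
  rcases hx.1.eq_or_lt with rfl | hpos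
  · exact h0
  · simpa [oddExtension, not_le.2 hpos] using hGx

end

theorem mu_mul_sq (k : ℝ) {n : ℕ} (hn : n ≠ 0) : mu n k * (n * π) ^ 2 = (n * π) ^ 4 + k := by
  unfold mu
  field_simp
  ring

theorem betaC_le_mu (k : ℝ) {n : ℕ} (hn : 1 ≤ n) : betaC k ≤ mu n k := by
  refine csInf_le ⟨-|k|, ?_⟩ ⟨n, hn, rfl⟩
  rintro _ ⟨m, hm, rfl⟩
  have hd : 1 ≤ (m : ℝ) ^ 2 * π ^ 2 := one_le_mul_of_one_le_of_one_le
    (one_le_pow₀ (by exact_mod_cast hm)) (one_le_pow₀ (by linarith [pi_gt_three]))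
  have : |k / ((m : ℝ) ^ 2 * π ^ 2)| ≤ |k| := by
    rw [abs_div, abs_of_pos (by positivity : (0 : ℝ) < (m : ℝ) ^ 2 * π ^ 2)]
    exact div_le_self (abs_nonneg k) hd
  unfold mu
  linarith [neg_abs_le (k / ((m : ℝ) ^ 2 * π ^ 2))]

theorem IsStationarySolution.sineCoeff_mul_eq_zero {β k : ℝ} {u : ℝ → ℝ}
    (hu : IsStationarySolution β k u) (n : ℕ) :
    ((n * π) ^ 4 + (β + ∫ y in (0 : ℝ)..1, deriv u y ^ 2) * (n * π) ^ 2 + k) * sineCoeff u n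
      = 0 := by
  obtain ⟨hsmooth, hode, hu0, hu1, hw0, hw1⟩ := hu
  set γ := β + ∫ y in (0 : ℝ)..1, deriv u y ^ 2
  have hω : sin (n * π) = 0 := sin_nat_mul_pi n
  have h2 := integral_iteratedDeriv_two_mul_sin (hsmooth.of_le (by norm_num)) hu0 hu1 hω
  have h4 := integral_iteratedDeriv_two_mul_sin
    (hsmooth.iteratedDeriv_right (m := 2) (i := 2) le_rfl) hw0 hw1 hω
  rw [iteratedDeriv_iteratedDeriv, show 2 + 2 = 4 from rfl, h2] at h4
  have hweak : ∫ x in (0 : ℝ)..1,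
      (iteratedDeriv 4 u x - γ * iteratedDeriv 2 u x + k * u x) * sin (n * π * x) = 0 := by
    rw [integral_congr (g := fun _ => 0) fun x hx => by
      rw [hode x (by rwa [uIcc_of_le zero_le_one] at hx), zero_mul],
      intervalIntegral.integral_zero]
  have hu4 : Continuous (iteratedDeriv 4 u) := hsmooth.continuous_iteratedDeriv 4 le_rfl
  have hu2 : Continuous (iteratedDeriv 2 u) := hsmooth.continuous_iteratedDeriv 2 (by norm_num)
  have hcont : Continuous u := hsmooth.continuous
  simp only [add_mul, sub_mul, mul_assoc γ, mul_assoc k] at hweak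
  rw [intervalIntegral.integral_add, intervalIntegral.integral_sub,
    intervalIntegral.integral_const_mul, intervalIntegral.integral_const_mul, h4, h2] at hweak
  · unfold sineCoeff
    linear_combination hweak
  all_goals exact Continuous.intervalIntegrable (by fun_prop) _ _

theorem only_straight_solution_general (k β : ℝ) (hβ : -betaC k ≤ β)
    (u : ℝ → ℝ) (hu : IsStationarySolution β k u) :
    ∀ x ∈ Set.Icc (0 : ℝ) 1, u x = 0 := by
  have ⟨hsmooth, _, hu0, hu1, _⟩ := hu
  set a := ∫ y in (0 : ℝ)..1, deriv u y ^ 2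
  rcases (integral_nonneg zero_le_one fun y _ => sq_nonneg (deriv u y)).eq_or_lt with ha | ha
  · exact fun x hx => eqOn_zero_of_integral_deriv_sq_eq_zero (hsmooth.of_le (by norm_num)) hu0
      ha.symm hx
  refine fun x hx => eqOn_zero_of_sineCoeff_eq_zero hsmooth.continuous hu0 hu1 (fun n => ?_) hx
  rcases Nat.eq_zero_or_pos n with rfl | hn
  · simp [sineCoeff]
  have hfactor : 0 < (n * π) ^ 4 + (β + a) * (n * π) ^ 2 + k := by
    have hω : 0 < (n * π) ^ 2 := by positivity
    nlinarith [mu_mul_sq k hn.ne', betaC_le_mu k hn]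
  exact (mul_eq_zero.1 (hu.sineCoeff_mul_eq_zero n)).resolve_left hfactor.ne'

/-- If `β ≥ −β_c(k)`, the only stationary beam solution with parameters `β`, `k` is the
identically zero function (the straight equilibrium position). -/
theorem only_straight_solution (k β : ℝ) (hk : 0 < k) (hβ : -betaC k ≤ β)
    (u : ℝ → ℝ) (hu : IsStationarySolution β k u) :
    ∀ x ∈ Set.Icc (0 : ℝ) 1, u x = 0 :=
  only_straight_solution_general k β hβ u hu
end
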